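/- arXiv:0708.0136 — 2 statements merged into one kernel-verified Lean document; each statement's English description precedes it below -/
import Mathlib

section
/- Let x be an n×n real upper-triangular unipotent matrix and fix indices i < j and k < l. Then the sum over all pairs (r,s) with r < s of the product of the (i,j) entry of x·E_{rs} and the (k,l) entry of x·E_{rs} equals δ_{jl} times the sum over r with max(i,k) ≤ r < l of x_{ir} x_{kr}. -/
namespace Matrix

variable {l m n α : Type*}

theorem mul_single_apply [Fintype m] [DecidableEq m] [DecidableEq n]
    [NonUnitalNonAssocSemiring α] (M : Matrix l m α) (i : m) (j : n) (c : α) (a : l) (b : n) :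
    (M * single i j c) a b = if j = b then M a i * c else 0 := by
  split_ifs with h
  · subst h
    exact mul_single_apply_same c i j a M
  · exact mul_single_apply_of_ne c i j a b (Ne.symm h) M

/-- Only the pairs `(r, s)` with `s = j = l` contribute, since `M * E_{rs}` is supported on
column `s`. -/
theorem sum_lt_mul_single_one_apply_mul [Fintype n] [LinearOrder n] [CommSemiring α]
    (M : Matrix m n α) (i k : m) (j l : n) :
    (∑ r : n, ∑ s : n,
        if r < s then (M * single r s (1 : α)) i j * (M * single r s (1 : α)) k l else 0) =
      if j = l then ∑ r : n, if r < l then M i r * M k r else 0 else 0 := by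
  simp only [mul_single_apply, mul_one, ite_zero_mul_ite_zero]
  split_ifs with hjl
  · subst hjl
    simp_rw [and_self, ← ite_and, and_comm (b := _ = j), ite_and, Finset.sum_ite_eq']
    simp only [Finset.mem_univ, if_true]
  · have hne (s : n) : ¬(s = j ∧ s = l) := fun h => hjl (h.1.symm.trans h.2)
    simp only [hne, if_false, ite_self, Finset.sum_const_zero]

theorem BlockTriangular.apply_mul_apply_eq_zero_of_lt_max [LinearOrder m] [MulZeroClass α]
    {M : Matrix m m α} (hM : M.BlockTriangular id) {i k r : m} (hr : r < max i k) :
    M i r * M k r = 0 := by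
  rcases lt_max_iff.1 hr with h | h
  · rw [hM h, zero_mul]
  · rw [hM h, mul_zero]

end Matrix

open Matrix in
theorem kappa_coordinate_functions_general (n : ℕ) (x : Matrix (Fin n) (Fin n) ℝ)
    (hx : x.BlockTriangular id)
    (i j k l : Fin n) :
    (∑ r : Fin n, ∑ s : Fin n,
        if r < s then
          (x * single r s (1 : ℝ)) i j * (x * single r s (1 : ℝ)) k l
        else 0) =
      (if j = l then (1 : ℝ) else 0) *
        ∑ r : Fin n, if max i k ≤ r ∧ r < l then x i r * x k r else 0 := by
  rw [sum_lt_mul_single_one_apply_mul, ite_zero_mul, one_mul]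
  congr 1
  refine Finset.sum_congr rfl fun r _ => ?_
  by_cases hr : max i k ≤ r
  · simp only [hr, true_and]
  · rw [if_neg (show ¬(max i k ≤ r ∧ r < l) from fun h => hr h.1),
      hx.apply_mul_apply_eq_zero_of_lt_max (not_le.1 hr), ite_self]

open Matrix in
/-- For an upper-triangular unipotent matrix `x` and indices `i < j`, `k < l`, the sum over all
pairs `(r,s)` with `r < s` of `(x·E_{rs})_{ij} (x·E_{rs})_{kl}` equals
`δ_{jl} ∑_{max i k ≤ r < l} x_{ir} x_{kr}`. -/
theorem kappa_coordinate_functions (n : ℕ) (x : Matrix (Fin n) (Fin n) ℝ)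
    (hx : x.BlockTriangular id) (hx1 : ∀ i, x i i = 1)
    (i j k l : Fin n) (hij : i < j) (hkl : k < l) :
    (∑ r : Fin n, ∑ s : Fin n,
        if r < s then
          (x * single r s (1 : ℝ)) i j * (x * single r s (1 : ℝ)) k l
        else 0) =
      (if j = l then (1 : ℝ) else 0) *
        ∑ r : Fin n, if max i k ≤ r ∧ r < l then x i r * x k r else 0 :=
  kappa_coordinate_functions_general n x hx i j k l
end

section
/- Let 𝔤 be a 3-dimensional solvable real Lie algebra with trivial center, spanned by V, X, Y, and suppose [V, X] = αX + βY and [V, Y] = −βX + αY for real numbers α, β. Then α² + β² ≠ 0, the derived algebra [𝔤, 𝔤] equals the span of X and Y, and [X, Y] = 0. -/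
/-!
The derivation `ad V` acts on `span {X, Y}` as the rotation-scaling `α + iβ`. If `α = β = 0`
then `V` is central, so `α² + β² ≠ 0`, and then `ad V` maps `span {X, Y}` onto itself, putting it
inside the derived algebra; solvability keeps the derived algebra proper, so by dimension count it
is `span {X, Y}`. Finally Jacobi makes `⁅X, Y⁆ ∈ span {X, Y}` an eigenvector of `ad V` for `2α`,
which `α ± iβ` is not.
-/

open Module Submodule

section Conformal

variable {K M : Type*} [Field K] [AddCommGroup M] [Module K M]

theorem span_pair_le_span_pair_of_conformal {X Y u w : M} {p q : K} (hpq : p ^ 2 + q ^ 2 ≠ 0)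
    (hu : u = p • X + q • Y) (hw : w = -q • X + p • Y) :
    span K {X, Y} ≤ span K {u, w} := by
  rw [span_le]
  rintro _ (rfl | rfl) <;> refine (smul_mem_iff _ hpq).mp (mem_span_pair.mpr ?_)
  exacts [⟨p, -q, by rw [hu, hw]; module⟩, ⟨q, p, by rw [hu, hw]; module⟩]

theorem eq_zero_of_mem_span_pair_of_conformal (f : M →ₗ[K] M) {X Y Z : M} {p q : K}
    (hXY : LinearIndependent K ![X, Y]) (hpq : p ^ 2 + q ^ 2 ≠ 0)
    (hX : f X = p • X + q • Y) (hY : f Y = -q • X + p • Y)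
    (hZ : Z ∈ span K {X, Y}) (hfZ : f Z = 0) : Z = 0 := by
  obtain ⟨c, d, rfl⟩ := mem_span_pair.mp hZ
  have hcoeff : (c * p - d * q) • X + (c * q + d * p) • Y = 0 := by
    rw [← hfZ, map_add, map_smul, map_smul, hX, hY]; module
  obtain ⟨h₁, h₂⟩ := LinearIndependent.pair_iff.mp hXY _ _ hcoeff
  have hc : (p ^ 2 + q ^ 2) * c = 0 := by linear_combination p * h₁ + q * h₂
  have hd : (p ^ 2 + q ^ 2) * d = 0 := by linear_combination p * h₂ - q * h₁
  simp [(mul_eq_zero.mp hc).resolve_left hpq, (mul_eq_zero.mp hd).resolve_left hpq]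

end Conformal

theorem lie_lie_eq_two_smul_of_conformal {R L : Type*} [CommRing R] [LieRing L] [LieAlgebra R L]
    {V X Y : L} {α β : R} (hVX : ⁅V, X⁆ = α • X + β • Y) (hVY : ⁅V, Y⁆ = -β • X + α • Y) :
    ⁅V, ⁅X, Y⁆⁆ = (2 * α) • ⁅X, Y⁆ := by
  rw [leibniz_lie, hVX, hVY]
  simp only [add_lie, smul_lie, lie_add, lie_smul, lie_self, smul_zero]
  module

namespace LieAlgebra

variable {K L : Type*} [Field K] [LieRing L] [LieAlgebra K L]

theorem eq_zero_of_lie_eq_zero_of_span_eq_top (hcenter : center K L = ⊥) {s : Set L}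
    (hs : span K s = ⊤) {V : L} (hV : ∀ z ∈ s, ⁅V, z⁆ = 0) : V = 0 := by
  have had : ad K L V = 0 := LinearMap.ext_on hs hV
  have hVc : V ∈ center K L := by
    rw [center, LieModule.mem_maxTrivSubmodule]
    intro w
    rw [← lie_skew, ← ad_apply (R := K), had, LinearMap.zero_apply, neg_zero]
  simpa [hcenter] using hVc

theorem derivedSeries_one_eq_of_le_of_finrank_add_one [FiniteDimensional K L] [IsSolvable L]
    [Nontrivial L] {S : Submodule K L} (hS : S ≤ derivedSeries K L 1)
    (hrank : finrank K S + 1 = finrank K L) :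
    (derivedSeries K L 1 : Submodule K L) = S := by
  have hlt : finrank K (derivedSeries K L 1 : Submodule K L) < finrank K L :=
    Submodule.finrank_lt (by simpa using (derivedSeries_lt_top_of_solvable K L).ne)
  exact (Submodule.eq_of_le_of_finrank_le hS (by omega)).symm

end LieAlgebra

open LieAlgebra in
/-- Let `𝔤` be a 3-dimensional solvable real Lie algebra with trivial center, spanned by
`V, X, Y`, with `[V,X] = αX + βY` and `[V,Y] = −βX + αY`.  Then `α² + β² ≠ 0`, the derived
algebra `[𝔤,𝔤]` is the span of `X` and `Y`, and `[X,Y] = 0`. -/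
theorem solvable_centerless_conformal_brackets
    (L : Type*) [LieRing L] [LieAlgebra ℝ L] (hdim : Module.finrank ℝ L = 3)
    [LieAlgebra.IsSolvable L] (hcenter : LieAlgebra.center ℝ L = ⊥)
    (V X Y : L) (hspan : Submodule.span ℝ {V, X, Y} = ⊤)
    (α β : ℝ) (hVX : ⁅V, X⁆ = α • X + β • Y) (hVY : ⁅V, Y⁆ = -β • X + α • Y) :
    α ^ 2 + β ^ 2 ≠ 0 ∧
      LieSubmodule.toSubmodule ⁅(⊤ : LieIdeal ℝ L), (⊤ : LieIdeal ℝ L)⁆ =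
        Submodule.span ℝ {X, Y} ∧
      ⁅X, Y⁆ = 0 := by
  have hVXY : LinearIndependent ℝ ![V, X, Y] :=
    linearIndependent_of_top_le_span_of_card_eq_finrank
      (by rw [Matrix.range_cons, Matrix.range_cons_cons_empty, Set.singleton_union, hspan])
      (by simp [hdim])
  have hV : V ≠ 0 := by simpa using hVXY.ne_zero 0
  have hXY : LinearIndependent ℝ ![X, Y] :=
    hVXY.comp Fin.succ (Fin.succ_injective 2)
  have hαβ : α ^ 2 + β ^ 2 ≠ 0 := by
    intro h
    obtain ⟨rfl, rfl⟩ : α = 0 ∧ β = 0 := by constructor <;> nlinarith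
    refine hV (eq_zero_of_lie_eq_zero_of_span_eq_top hcenter hspan ?_)
    rintro _ (rfl | rfl | rfl) <;> simp [hVX, hVY]
  have hle : span ℝ {X, Y} ≤ derivedSeries ℝ L 1 :=
    (span_pair_le_span_pair_of_conformal hαβ hVX hVY).trans <| span_le.mpr <| by
      rintro _ (rfl | rfl) <;> exact LieSubmodule.lie_mem_lie trivial trivial
  have : Nontrivial L := Module.nontrivial_of_finrank_eq_succ hdim
  have : FiniteDimensional ℝ L := Module.finite_of_finrank_eq_succ hdim
  have hD : (derivedSeries ℝ L 1 : Submodule ℝ L) = span ℝ {X, Y} :=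
    derivedSeries_one_eq_of_le_of_finrank_add_one hle <| by
      rw [hdim, ← Matrix.range_cons_cons_empty X Y ![], finrank_span_eq_card hXY]; simp
  refine ⟨hαβ, hD, eq_zero_of_mem_span_pair_of_conformal (ad ℝ L V - (2 * α) • LinearMap.id)
    hXY (p := -α) (q := β) (by simpa using hαβ) ?_ ?_ ?_ ?_⟩
  · simp only [LinearMap.sub_apply, LinearMap.smul_apply, LinearMap.id_apply, ad_apply, hVX]
    module
  · simp only [LinearMap.sub_apply, LinearMap.smul_apply, LinearMap.id_apply, ad_apply, hVY]
    module
  · exact hD ▸ LieSubmodule.lie_mem_lie trivial trivial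
  · simp [lie_lie_eq_two_smul_of_conformal hVX hVY]
end
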